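/- Let ζ be a non-bounding 1-cycle of K and let S be a minimal solution set for ζ. Then S is a 1-cocycle, and the dual edges corresponding to the edges of S induce a circle subgraph (a connected 2-regular cycle graph) of the dual graph D_K. -/

import Mathlib

namespace ArxivCut

noncomputable section

attribute [local instance] Classical.propDecidable

open Finset

variable {V : Type*} [Fintype V] [DecidableEq V]

/-- A finite abstract simplicial complex on the vertex type `V`. -/
structure SComplex (V : Type*) [DecidableEq V] where
  faces : Finset (Finset V)
  nonempty_mem : ∀ s ∈ faces, s.Nonempty
  down_closed : ∀ s ∈ faces, ∀ t ⊆ s, t.Nonempty → t ∈ faces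

/-- The boundary of a `𝔽₂`-chain (a chain is identified with its set of simplices):
a simplex `τ` lies in the boundary iff it is a facet of an odd number of members. -/
def bdry (c : Finset (Finset V)) : Finset (Finset V) :=
  Finset.univ.filter fun τ => Odd ((c.filter fun σ => τ ⊆ σ ∧ τ.card + 1 = σ.card)).card

/-- `c` is an `r`-chain of `K` (a set of `r`-simplices of `K`). -/
def IsRChain (K : SComplex V) (r : ℕ) (c : Finset (Finset V)) : Prop :=
  ∀ σ ∈ c, σ ∈ K.faces ∧ σ.card = r + 1

/-- `c` is an `r`-cycle of `K`. -/
def IsRCycle (K : SComplex V) (r : ℕ) (c : Finset (Finset V)) : Prop :=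
  IsRChain K r c ∧ bdry c = ∅

/-- `z` is a bounding `r`-cycle of `K`: it is the boundary of an `(r+1)`-chain of `K`. -/
def IsBounding (K : SComplex V) (r : ℕ) (z : Finset (Finset V)) : Prop :=
  ∃ b, IsRChain K (r + 1) b ∧ bdry b = z

/-- Two `r`-chains are homologous in `K` if their `𝔽₂`-sum (symmetric difference) bounds. -/
def Homologous (K : SComplex V) (r : ℕ) (a b : Finset (Finset V)) : Prop :=
  IsBounding K r (symmDiff a b)


/-- `e` is an edge (1-simplex) of `K`. -/
def IsEdge (K : SComplex V) (e : Finset V) : Prop := e ∈ K.faces ∧ e.card = 2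

/-- `t` is a triangle (2-simplex) of `K`. -/
def IsTri (K : SComplex V) (t : Finset V) : Prop := t ∈ K.faces ∧ t.card = 3

/-- The 1-skeleton of `K`, as a simple graph on the vertex type. -/
def skeleton (K : SComplex V) : SimpleGraph V where
  Adj u w := u ≠ w ∧ ({u, w} : Finset V) ∈ K.faces
  symm := by
    constructor
    intro u w h
    refine ⟨h.1.symm, ?_⟩
    rw [Finset.pair_comm]
    exact h.2
  loopless := by constructor; intro v h; exact h.1 rfl

/-- `K` is a triangulation of a closed surface: a finite connected 2-dimensional
simplicial complex in which every edge is contained in exactly two triangles and the link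
of every vertex is a single cycle (equivalently, the triangles around each vertex are
connected through edges containing that vertex). -/
structure IsClosedSurface (K : SComplex V) : Prop where
  vert_mem : ∀ v : V, ({v} : Finset V) ∈ K.faces
  dim_le : ∀ s ∈ K.faces, s.card ≤ 3
  pure2 : ∀ s ∈ K.faces, ∃ t, IsTri K t ∧ s ⊆ t
  edge_in_two_tri : ∀ e, IsEdge K e →
    (Finset.univ.filter fun t => IsTri K t ∧ e ⊆ t).card = 2
  conn : (skeleton K).Connected
  link_single_cycle : ∀ v : V, ∀ t₁ t₂, IsTri K t₁ → IsTri K t₂ → v ∈ t₁ → v ∈ t₂ →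
    Relation.ReflTransGen
      (fun a b => IsTri K a ∧ IsTri K b ∧ v ∈ a ∧ v ∈ b ∧ (a ∩ b).card = 2) t₁ t₂

/-- `c` is a 1-cycle of `K`: a set of edges of `K` meeting every vertex in an even number
of edges. -/
def IsOneCycle (K : SComplex V) (c : Finset (Finset V)) : Prop :=
  (∀ e ∈ c, IsEdge K e) ∧ ∀ v : V, Even ((c.filter fun e => v ∈ e).card)

/-- `z` is a sum of boundaries of triangles of `K`. -/
def IsBounding1 (K : SComplex V) (z : Finset (Finset V)) : Prop :=
  ∃ T : Finset (Finset V), (∀ t ∈ T, IsTri K t) ∧ bdry T = z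

/-- Two 1-chains are homologous: their sum (symmetric difference) is a sum of triangle
boundaries. -/
def Homol1 (K : SComplex V) (a b : Finset (Finset V)) : Prop :=
  IsBounding1 K (symmDiff a b)

/-- `η` is a 1-cocycle of `K`: a set of edges of `K` such that every triangle of `K`
contains an even number of edges of `η`. -/
def IsCocycle (K : SComplex V) (η : Finset (Finset V)) : Prop :=
  (∀ e ∈ η, IsEdge K e) ∧ ∀ t, IsTri K t → Even ((η.filter fun e => e ⊆ t).card)

/-- The dual edges corresponding to the edge set `F` : two distinct triangles of `K` are
related if they share an edge belonging to `F`. -/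
def DualStep (K : SComplex V) (F : Finset (Finset V)) (t₁ t₂ : Finset V) : Prop :=
  t₁ ≠ t₂ ∧ IsTri K t₁ ∧ IsTri K t₂ ∧ ∃ e ∈ F, e ⊆ t₁ ∧ e ⊆ t₂

/-- A triangle incident to the edge set `F` (a node of the subgraph of the dual graph
induced by the dual edges corresponding to `F`). -/
def Incident (K : SComplex V) (F : Finset (Finset V)) (t : Finset V) : Prop :=
  IsTri K t ∧ ∃ e ∈ F, e ⊆ t

/-- The subgraph of the dual graph `D_K` induced by the dual edges corresponding to the
edge set `F` is connected. -/
def DualConnected (K : SComplex V) (F : Finset (Finset V)) : Prop :=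
  ∀ t₁ t₂, Incident K F t₁ → Incident K F t₂ →
    Relation.ReflTransGen (DualStep K F) t₁ t₂

/-- `S` is a feasible set for the 1-cycle `ζ`: it intersects every cycle homologous
to `ζ`. -/
def Feasible (K : SComplex V) (ζ S : Finset (Finset V)) : Prop :=
  ∀ γ, IsOneCycle K γ → Homol1 K γ ζ → (γ ∩ S).Nonempty

/-- The coboundary `δ(A)` of a set `A` of vertices: the set of edges of `K` with exactly
one endpoint in `A`. -/
def cobdryV (K : SComplex V) (A : Finset V) : Finset (Finset V) :=
  Finset.univ.filter fun e => IsEdge K e ∧ (e ∩ A).card = 1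

/-- Two cocycles are cohomologous: their sum (symmetric difference) is a coboundary. -/
def Cohomologous (K : SComplex V) (η η' : Finset (Finset V)) : Prop :=
  ∃ A : Finset V, symmDiff η η' = cobdryV K A

/-! Every edge `e` of `S` has, by minimality, a cycle `γₑ` homologous to `ζ` meeting `S` only in
`e`. If a triangle `t` contained an odd number of edges of `S`, the sum of the `γₑ` over those
edges and of `∂t` would be a cycle homologous to `ζ` missing `S`; so `S` is a cocycle, and it
meets every triangle in `0` or `2` edges, which makes the dual subgraph 2-regular. A cocycle has
the same parity of intersection with homologous chains, so the edges of `S` reachable in the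
dual subgraph from one triangle form a sub-cocycle that still meets every cycle homologous to
`ζ` (an odd number of times, like `γₑ`); by minimality it is all of `S`, which gives
connectedness. -/

open scoped symmDiff

section Parity

variable {α : Type*} [DecidableEq α]

theorem card_symmDiff_add_two_mul_card_inter (s t : Finset α) :
    (s ∆ t).card + 2 * (s ∩ t).card = s.card + t.card := by
  have hsdiff := card_sdiff_add_card_eq_card (inter_subset_union : s ∩ t ⊆ s ∪ t)
  have hunion := card_union_add_card_inter s t
  rw [symmDiff_eq_sup_sdiff_inf]
  change ((s ∪ t) \ (s ∩ t)).card + _ = _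
  omega

theorem even_card_symmDiff_iff (s t : Finset α) :
    Even (s ∆ t).card ↔ (Even s.card ↔ Even t.card) := by
  rw [← Nat.even_add, ← card_symmDiff_add_two_mul_card_inter, Nat.even_add]
  simp

theorem filter_symmDiff (p : α → Prop) [DecidablePred p] (s t : Finset α) :
    (s ∆ t).filter p = s.filter p ∆ t.filter p := by
  ext x
  simp only [mem_filter, mem_symmDiff]
  tauto

theorem symmDiff_inter_distrib (s t u : Finset α) : (s ∆ t) ∩ u = (s ∩ u) ∆ (t ∩ u) :=
  inf_symmDiff_distrib_right s t u

theorem inter_eq_of_subset_of_ne {t t' e : Finset α} (ht : t.card = 3) (ht' : t'.card = 3)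
    (he : e.card = 2) (hne : t ≠ t') (het : e ⊆ t) (het' : e ⊆ t') : t ∩ t' = e := by
  have hle : (t ∩ t').card ≤ 2 := by
    by_contra! h
    have htt : t ∩ t' = t := eq_of_subset_of_card_le inter_subset_left (by omega)
    exact hne (eq_of_subset_of_card_le (htt ▸ inter_subset_right) (by omega))
  exact (eq_of_subset_of_card_le (subset_inter het het') (by omega)).symm

end Parity

section Chains

variable {K : SComplex V}

theorem bdry_empty : bdry (∅ : Finset (Finset V)) = ∅ := by
  ext x
  simp [bdry]

theorem bdry_symmDiff (a b : Finset (Finset V)) : bdry (a ∆ b) = bdry a ∆ bdry b := by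
  ext x
  simp only [bdry, mem_filter, mem_univ, true_and, mem_symmDiff, filter_symmDiff,
    ← Nat.not_even_iff_odd, even_card_symmDiff_iff]
  tauto

theorem mem_bdry_singleton {σ x : Finset V} :
    x ∈ bdry {σ} ↔ x ⊆ σ ∧ x.card + 1 = σ.card := by
  by_cases h : x ⊆ σ ∧ x.card + 1 = σ.card <;> simp [bdry, filter_singleton, h]

theorem card_filter_mem_bdry_singleton {σ : Finset V} {v : V} (hv : v ∈ σ) :
    ((bdry {σ}).filter fun e => v ∈ e).card = σ.card - 1 := by
  have hfacets : (bdry {σ}).filter (fun e => v ∈ e) = (σ.erase v).image σ.erase := by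
    ext x
    simp only [mem_filter, mem_bdry_singleton, mem_image, mem_erase]
    constructor
    · rintro ⟨⟨hxσ, hcard⟩, hvx⟩
      have hcov : x ⋖ σ :=
        covBy_iff_card_sdiff_eq_one.2 ⟨hxσ, by rw [card_sdiff_of_subset hxσ]; omega⟩
      obtain ⟨w, hw, rfl⟩ := covBy_iff_exists_erase.1 hcov
      exact ⟨w, ⟨fun hwv => by simp [hwv] at hvx, hw⟩, rfl⟩
    · rintro ⟨w, ⟨hwv, hw⟩, rfl⟩
      have := card_pos.2 ⟨w, hw⟩
      exact ⟨⟨erase_subset w σ, by rw [card_erase_of_mem hw]; omega⟩,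
        mem_erase.2 ⟨Ne.symm hwv, hv⟩⟩
  rw [hfacets, card_image_of_injOn ((erase_injOn σ).mono (erase_subset v σ)),
    card_erase_of_mem hv]

theorem bdry_singleton_inter {S : Finset (Finset V)} {t : Finset V}
    (hS : ∀ e ∈ S, e.card = 2) (ht : t.card = 3) :
    bdry {t} ∩ S = S.filter (· ⊆ t) := by
  ext e
  simp only [mem_inter, mem_filter, mem_bdry_singleton, ht]
  constructor
  · rintro ⟨⟨het, -⟩, heS⟩
    exact ⟨heS, het⟩
  · rintro ⟨heS, het⟩
    exact ⟨⟨het, by rw [hS e heS]⟩, heS⟩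

omit [Fintype V] in
theorem IsOneCycle.symmDiff {a b : Finset (Finset V)} (ha : IsOneCycle K a)
    (hb : IsOneCycle K b) : IsOneCycle K (a ∆ b) := by
  refine ⟨fun e he => ?_, fun v => ?_⟩
  · rcases mem_symmDiff.1 he with ⟨hea, -⟩ | ⟨heb, -⟩
    exacts [ha.1 e hea, hb.1 e heb]
  · rw [filter_symmDiff, even_card_symmDiff_iff]
    exact iff_of_true (ha.2 v) (hb.2 v)

theorem isOneCycle_bdry_singleton {t : Finset V} (ht : IsTri K t) :
    IsOneCycle K (bdry {t}) := by
  refine ⟨fun x hx => ?_, fun v => ?_⟩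
  · obtain ⟨hxt, hcard⟩ := mem_bdry_singleton.1 hx
    have hx2 : x.card = 2 := by rw [ht.2] at hcard; omega
    exact ⟨K.down_closed t ht.1 x hxt (card_pos.1 (by omega)), hx2⟩
  · by_cases hv : v ∈ t
    · rw [card_filter_mem_bdry_singleton hv, ht.2]
      decide
    · rw [filter_false_of_mem fun x hx hvx => hv ((mem_bdry_singleton.1 hx).1 hvx)]
      exact Even.zero

theorem IsBounding1.symmDiff {a b : Finset (Finset V)} (ha : IsBounding1 K a)
    (hb : IsBounding1 K b) : IsBounding1 K (a ∆ b) := by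
  obtain ⟨A, hA, rfl⟩ := ha
  obtain ⟨B, hB, rfl⟩ := hb
  refine ⟨A ∆ B, fun t ht => ?_, bdry_symmDiff A B⟩
  rcases mem_symmDiff.1 ht with ⟨htA, -⟩ | ⟨htB, -⟩
  exacts [hA t htA, hB t htB]

theorem isBounding1_bdry_singleton {t : Finset V} (ht : IsTri K t) :
    IsBounding1 K (bdry {t}) :=
  ⟨{t}, fun _ hu => mem_singleton.1 hu ▸ ht, rfl⟩

theorem Homol1.symmDiff {a b c d : Finset (Finset V)} (hab : Homol1 K a b)
    (hcd : Homol1 K c d) : Homol1 K (a ∆ c) (b ∆ d) := by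
  unfold Homol1
  rw [symmDiff_symmDiff_symmDiff_comm]
  exact IsBounding1.symmDiff hab hcd

theorem Homol1.symmDiff_of_isBounding1 {a b z : Finset (Finset V)} (hab : Homol1 K a b)
    (hz : IsBounding1 K z) : Homol1 K (a ∆ z) b := by
  unfold Homol1
  rw [symmDiff_right_comm]
  exact IsBounding1.symmDiff hab hz

theorem Homol1.trans {a b c : Finset (Finset V)} (hab : Homol1 K a b) (hbc : Homol1 K b c) :
    Homol1 K a c := by
  have h := IsBounding1.symmDiff hab hbc
  rwa [symmDiff_assoc, symmDiff_symmDiff_cancel_left] at h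

theorem Homol1.symm {a b : Finset (Finset V)} (h : Homol1 K a b) : Homol1 K b a := by
  unfold Homol1
  rwa [symmDiff_comm]

theorem even_card_inter_of_isBounding1 {S z : Finset (Finset V)} (hS : IsCocycle K S)
    (hz : IsBounding1 K z) : Even (z ∩ S).card := by
  obtain ⟨T, hT, rfl⟩ := hz
  induction T using Finset.induction_on with
  | empty => simp [bdry_empty]
  | insert t T htT ih =>
    have hinsert : insert t T = {t} ∆ T :=
      (symmDiff_eq_union (disjoint_singleton_left.2 htT)).symm ▸ insert_eq t T
    have ht := hT t (mem_insert_self t T)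
    rw [hinsert, bdry_symmDiff, symmDiff_inter_distrib, even_card_symmDiff_iff,
      bdry_singleton_inter (fun e he => (hS.1 e he).2) ht.2]
    exact iff_of_true (hS.2 t ht) (ih fun u hu => hT u (mem_insert_of_mem hu))

end Chains

section MinimalSolution

variable {K : SComplex V} {ζ S : Finset (Finset V)}

theorem exists_inter_eq_singleton_of_minimal (hfeas : Feasible K ζ S)
    (hmin : ∀ S', S' ⊂ S → ¬ Feasible K ζ S') {e : Finset V} (he : e ∈ S) :
    ∃ γ, IsOneCycle K γ ∧ Homol1 K γ ζ ∧ γ ∩ S = {e} := by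
  have h := hmin (S.erase e) (erase_ssubset he)
  simp only [Feasible, not_forall, not_nonempty_iff_eq_empty, inter_erase,
    erase_eq_empty_iff] at h
  obtain ⟨γ, hγ, hhom, hγS⟩ := h
  refine ⟨γ, hγ, hhom, hγS.resolve_left ?_⟩
  exact (hfeas γ hγ hhom).ne_empty

theorem exists_oneCycle_inter_eq
    (hsingle : ∀ e ∈ S, ∃ γ, IsOneCycle K γ ∧ Homol1 K γ ζ ∧ γ ∩ S = {e})
    {E : Finset (Finset V)} (hE : E ⊆ S) :
    ∃ γ, IsOneCycle K γ ∧ Homol1 K γ (if Even E.card then ∅ else ζ) ∧ γ ∩ S = E := by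
  induction E using Finset.induction_on with
  | empty => exact ⟨∅, ⟨by simp, by simp⟩, ⟨∅, by simp, by simp [bdry_empty]⟩, by simp⟩
  | insert e E heE ih =>
    obtain ⟨γ, hγ, hhom, hγS⟩ := ih ((subset_insert e E).trans hE)
    obtain ⟨γe, hγe, hhome, hγeS⟩ := hsingle e (hE (mem_insert_self e E))
    refine ⟨γ ∆ γe, hγ.symmDiff hγe, ?_, ?_⟩
    · convert hhom.symmDiff hhome using 1
      by_cases hEven : Even E.card
      · simp only [card_insert_of_notMem heE, Nat.even_add_one, hEven, not_true, if_false,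
          if_true]
        exact (bot_symmDiff ζ).symm
      · simp [card_insert_of_notMem heE, Nat.even_add_one, hEven]
    · rw [symmDiff_inter_distrib, hγS, hγeS, symmDiff_eq_union
        (disjoint_singleton_right.2 heE), union_comm, ← insert_eq]

theorem isCocycle_of_minimal (hSe : ∀ e ∈ S, IsEdge K e) (hfeas : Feasible K ζ S)
    (hmin : ∀ S', S' ⊂ S → ¬ Feasible K ζ S') : IsCocycle K S := by
  refine ⟨hSe, fun t ht => ?_⟩
  by_contra hodd
  obtain ⟨γ, hγ, hhom, hγS⟩ := exists_oneCycle_inter_eq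
    (fun e he => exists_inter_eq_singleton_of_minimal hfeas hmin he) (filter_subset (· ⊆ t) S)
  rw [if_neg hodd] at hhom
  have hmiss := hfeas (γ ∆ bdry {t}) (hγ.symmDiff (isOneCycle_bdry_singleton ht))
    (hhom.symmDiff_of_isBounding1 (isBounding1_bdry_singleton ht))
  rw [symmDiff_inter_distrib, hγS, bdry_singleton_inter (fun e he => (hSe e he).2) ht.2,
    symmDiff_self] at hmiss
  exact not_nonempty_empty hmiss

theorem eq_of_isCocycle_of_subset_of_minimal (hfeas : Feasible K ζ S)
    (hmin : ∀ S', S' ⊂ S → ¬ Feasible K ζ S') {S₁ : Finset (Finset V)}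
    (hS₁ : IsCocycle K S₁) (hsub : S₁ ⊆ S) (hne : S₁.Nonempty) : S₁ = S := by
  obtain ⟨e, he⟩ := hne
  obtain ⟨γ₀, -, hγ₀, hγ₀S⟩ := exists_inter_eq_singleton_of_minimal hfeas hmin (hsub he)
  have hγ₀S₁ : γ₀ ∩ S₁ = {e} := by
    refine Subset.antisymm (fun x hx => ?_) (singleton_subset_iff.2 ?_)
    · rw [← hγ₀S]
      exact inter_subset_inter_left hsub hx
    · exact mem_inter.2 ⟨(mem_inter.1 (hγ₀S ▸ mem_singleton_self e)).1, he⟩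
  have hfeas₁ : Feasible K ζ S₁ := by
    intro γ _ hγ
    have hpar := even_card_inter_of_isBounding1 hS₁ (hγ.trans hγ₀.symm)
    rw [symmDiff_inter_distrib, even_card_symmDiff_iff, hγ₀S₁, card_singleton] at hpar
    exact card_pos.1 (Nat.pos_of_ne_zero fun h0 => by simp [h0] at hpar)
  by_contra hne
  exact hmin S₁ (ssubset_of_subset_of_ne hsub hne) hfeas₁

end MinimalSolution

section DualGraph

variable {K : SComplex V}

theorem exists_ne_isTri_of_subset (hK : IsClosedSurface K) {e t : Finset V}
    (he : IsEdge K e) (ht : IsTri K t) (het : e ⊆ t) :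
    ∃ t', IsTri K t' ∧ e ⊆ t' ∧ t' ≠ t := by
  have hcard := hK.edge_in_two_tri e he
  have hmem : t ∈ univ.filter fun u => IsTri K u ∧ e ⊆ u := mem_filter.2 ⟨mem_univ t, ht, het⟩
  obtain ⟨t', ht'⟩ : ((univ.filter fun u => IsTri K u ∧ e ⊆ u).erase t).Nonempty := by
    rw [← card_pos, card_erase_of_mem hmem, hcard]
    norm_num
  rw [mem_erase, mem_filter] at ht'
  obtain ⟨ht't, -, ht'K, het'⟩ := ht'
  exact ⟨t', ht'K, het', ht't⟩

theorem eq_of_isTri_of_subset (hK : IsClosedSurface K) {e t a b : Finset V}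
    (he : IsEdge K e) (ht : IsTri K t) (ha : IsTri K a) (hb : IsTri K b)
    (het : e ⊆ t) (hea : e ⊆ a) (heb : e ⊆ b) (hat : a ≠ t) (hbt : b ≠ t) : a = b := by
  by_contra hab
  have h3 : 2 < (univ.filter fun u => IsTri K u ∧ e ⊆ u).card :=
    two_lt_card_iff.2 ⟨t, a, b, by simp [ht, het], by simp [ha, hea], by simp [hb, heb],
      Ne.symm hat, Ne.symm hbt, hab⟩
  rw [hK.edge_in_two_tri e he] at h3
  exact lt_irrefl 2 h3

theorem card_filter_dualStep (hK : IsClosedSurface K) {S : Finset (Finset V)}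
    (hSe : ∀ e ∈ S, IsEdge K e) {t : Finset V} (ht : IsTri K t) :
    (univ.filter fun t' => DualStep K S t t').card = (S.filter (· ⊆ t)).card := by
  have hinter : ∀ t', DualStep K S t t' → t ∩ t' ∈ S.filter (· ⊆ t) := by
    rintro t' ⟨hne, -, ht', e, heS, het, het'⟩
    rw [inter_eq_of_subset_of_ne ht.2 ht'.2 (hSe e heS).2 hne het het']
    exact mem_filter.2 ⟨heS, het⟩
  refine card_bij (fun t' _ => t ∩ t') (fun t' h => hinter t' (mem_filter.1 h).2) ?_ ?_
  · intro a ha b hb hab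
    have hDa := (mem_filter.1 ha).2
    have hDb := (mem_filter.1 hb).2
    obtain ⟨heS, -⟩ := mem_filter.1 (hinter a hDa)
    exact eq_of_isTri_of_subset hK (hSe _ heS) ht hDa.2.2.1 hDb.2.2.1 inter_subset_left
      inter_subset_right (hab ▸ inter_subset_right) (Ne.symm hDa.1) (Ne.symm hDb.1)
  · intro e he
    obtain ⟨heS, het⟩ := mem_filter.1 he
    obtain ⟨t', ht', het', ht't⟩ := exists_ne_isTri_of_subset hK (hSe e heS) ht het
    refine ⟨t', mem_filter.2 ⟨mem_univ t', Ne.symm ht't, ht, ht', e, heS, het, het'⟩, ?_⟩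
    exact inter_eq_of_subset_of_ne ht.2 ht'.2 (hSe e heS).2 (Ne.symm ht't) het het'

omit [Fintype V] in
theorem card_filter_subset_eq_two {S : Finset (Finset V)} (hS : IsCocycle K S)
    {t : Finset V} (ht : Incident K S t) : (S.filter (· ⊆ t)).card = 2 := by
  obtain ⟨htK, e, heS, het⟩ := ht
  have hpos : 0 < (S.filter (· ⊆ t)).card := card_pos.2 ⟨e, mem_filter.2 ⟨heS, het⟩⟩
  have hle : (S.filter (· ⊆ t)).card ≤ 3 := by
    have hsub : S.filter (· ⊆ t) ⊆ t.powersetCard 2 := fun x hx =>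
      mem_powersetCard.2 ⟨(mem_filter.1 hx).2, (hS.1 x (mem_filter.1 hx).1).2⟩
    simpa [htK.2] using card_le_card hsub
  obtain ⟨k, hk⟩ := hS.2 t htK
  omega

omit [Fintype V] in
theorem reflTransGen_dualStep_of_subset {F : Finset (Finset V)} {e u u' : Finset V}
    (he : e ∈ F) (hu : IsTri K u) (hu' : IsTri K u') (heu : e ⊆ u) (heu' : e ⊆ u') :
    Relation.ReflTransGen (DualStep K F) u u' := by
  by_cases h : u = u'
  · exact h ▸ Relation.ReflTransGen.refl
  · exact Relation.ReflTransGen.single ⟨h, hu, hu', e, he, heu, heu'⟩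

theorem dualConnected_of_minimal {ζ S : Finset (Finset V)} (hfeas : Feasible K ζ S)
    (hmin : ∀ S', S' ⊂ S → ¬ Feasible K ζ S') (hS : IsCocycle K S) : DualConnected K S := by
  rintro t₁ t₂ ⟨ht₁, e₁, he₁S, he₁t₁⟩ ⟨ht₂, e₂, he₂S, he₂t₂⟩
  set S₁ := S.filter fun e =>
    ∃ u, IsTri K u ∧ e ⊆ u ∧ Relation.ReflTransGen (DualStep K S) t₁ u
  have hreach : ∀ e ∈ S₁, ∀ u, IsTri K u → e ⊆ u →
      Relation.ReflTransGen (DualStep K S) t₁ u := by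
    intro e he u hu heu
    obtain ⟨heS, u', hu', heu', hreach'⟩ := mem_filter.1 he
    exact hreach'.trans (reflTransGen_dualStep_of_subset heS hu' hu heu' heu)
  have hS₁ : IsCocycle K S₁ := by
    refine ⟨fun e he => hS.1 e (mem_filter.1 he).1, fun u hu => ?_⟩
    by_cases h : ∃ e ∈ S₁, e ⊆ u
    · obtain ⟨e, he, heu⟩ := h
      have hfilter : S₁.filter (· ⊆ u) = S.filter (· ⊆ u) := by
        ext f
        simp only [S₁, mem_filter, and_assoc]
        constructor
        · rintro ⟨hfS, -, hfu⟩
          exact ⟨hfS, hfu⟩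
        · rintro ⟨hfS, hfu⟩
          exact ⟨hfS, ⟨u, hu, hfu, hreach e he u hu heu⟩, hfu⟩
      rw [hfilter]
      exact hS.2 u hu
    · rw [filter_false_of_mem fun e he heu => h ⟨e, he, heu⟩]
      exact Even.zero
  have hS₁S : S₁ = S := eq_of_isCocycle_of_subset_of_minimal hfeas hmin hS₁ (filter_subset _ _)
    ⟨e₁, mem_filter.2 ⟨he₁S, t₁, ht₁, he₁t₁, Relation.ReflTransGen.refl⟩⟩
  exact hreach e₂ (hS₁S ▸ he₂S) t₂ ht₂ he₂t₂

end DualGraph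

theorem statement6_general (K : SComplex V) (hK : IsClosedSurface K)
    (ζ : Finset (Finset V))
    (S : Finset (Finset V)) (hSe : ∀ e ∈ S, IsEdge K e)
    (hfeas : Feasible K ζ S) (hmin : ∀ S', S' ⊂ S → ¬ Feasible K ζ S') :
    IsCocycle K S ∧ DualConnected K S ∧
      ∀ t, Incident K S t →
        (Finset.univ.filter fun t' => DualStep K S t t').card = 2 := by
  have hS := isCocycle_of_minimal hSe hfeas hmin
  refine ⟨hS, dualConnected_of_minimal hfeas hmin hS, fun t ht => ?_⟩
  rw [card_filter_dualStep hK hSe ht.1, card_filter_subset_eq_two hS ht]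

/-- Let `ζ` be a non-bounding 1-cycle of `K` and `S` a minimal solution
set for `ζ`.  Then `S` is a 1-cocycle, and the dual edges corresponding to the edges of
`S` induce a circle subgraph (a connected 2-regular cycle graph) of the dual
graph `D_K`. -/
theorem statement6 (K : SComplex V) (hK : IsClosedSurface K)
    (ζ : Finset (Finset V)) (hζ : IsOneCycle K ζ) (hnb : ¬ IsBounding1 K ζ)
    (S : Finset (Finset V)) (hSe : ∀ e ∈ S, IsEdge K e)
    (hfeas : Feasible K ζ S) (hmin : ∀ S', S' ⊂ S → ¬ Feasible K ζ S') :
    IsCocycle K S ∧ DualConnected K S ∧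
      ∀ t, Incident K S t →
        (Finset.univ.filter fun t' => DualStep K S t t').card = 2 :=
  statement6_general K hK ζ S hSe hfeas hmin

end

end ArxivCut
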